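/- arXiv:1603.08176 — 2 statements merged into one kernel-verified Lean document; each statement's English description precedes it below -/
import Mathlib

section
/- Distance-like lower bound for the relative total energy (Lemma on I, part (iv)): Assume (F̄, v̄, θ̄) ∈ Γ_{M,δ}, that ψ(F,θ) ∈ C³(ℝ^{d×d} × [0,∞)) and η(F,θ), Σ(F,θ) ∈ C²(ℝ^{d×d} × [0,∞)) satisfy the constitutive relations Σ = ∂ψ/∂F, η = −∂ψ/∂θ, e = ψ + θη, and the Gibbs conditions ψ_FF > 0 and η_θ > 0. Under the growth hypotheses (a1), (a2), (a3), there exist constants R, K₁ and K₂ such that I(F,v,θ|F̄,v̄,θ̄) ≥ (1/4)K₁(|F − F̄|^p + |θ − θ̄|^q + |v − v̄|²) whenever |F|^p + θ^q + |v|² > R, and I(F,v,θ|F̄,v̄,θ̄) ≥ K₂(|F − F̄|² + |θ − θ̄|² + |v − v̄|²) whenever |F|^p + θ^q + |v|² ≤ R, for all (F̄, v̄, θ̄) ∈ Γ_{M,δ}. -/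
/-!
Far from `Γ_{M,δ}` the relative energy equals
`e(F,θ) - θ̄ η(F,θ) - ψ(F̄,θ̄) - Σ(F̄,θ̄) : (F - F̄) + ½|v - v̄|²`. By (a1) the internal energy `e`
grows like `X = |F|^p + θ^q`, which dominates the other terms: `θ̄ η` is `o(X)` by (a3),
`ψ(F̄,θ̄)` and `Σ(F̄,θ̄)` are bounded on the compact set `Γ_{M,δ}`, and `|Σ(F̄,θ̄)| |F|` is
absorbed by Young's inequality. As `|F - F̄|^p + |θ - θ̄|^q = O(X + 1)`, the first bound holds
once `X + |v|²` is large.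

On a bounded set the relative energy splits as
`[ψ(F,θ̄) - ψ(F̄,θ̄) - Σ(F̄,θ̄) : (F - F̄)] + [ψ(F,θ) - ψ(F,θ̄) + η(F,θ)(θ - θ̄)] + ½|v - v̄|²`.
The brackets are second-order Taylor remainders of `ψ(·,θ̄)` about `F̄` and of `-ψ(F,·)` about `θ`,
so they are bounded below through uniform positive lower bounds for `ψ_FF` and `η_θ`, which
exist by continuity of these second derivatives on compact sets.
-/

open Set
open scoped RealInnerProductSpace

theorem le_rpow_inv_of_rpow_add_rpow_le {p q x y r : ℝ} (hp : 0 < p) (hq : 0 < q)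
    (hx : 0 ≤ x) (hy : 0 ≤ y) (h : x ^ p + y ^ q ≤ r) :
    x ≤ r ^ p⁻¹ ∧ y ≤ r ^ q⁻¹ := by
  have hxp : 0 ≤ x ^ p := Real.rpow_nonneg hx p
  have hyq : 0 ≤ y ^ q := Real.rpow_nonneg hy q
  have hr : 0 ≤ r := by linarith
  exact ⟨(Real.le_rpow_inv_iff_of_pos hx hr hp).2 (by linarith),
    (Real.le_rpow_inv_iff_of_pos hy hr hq).2 (by linarith)⟩

theorem exists_mul_le_mul_rpow_add {c p : ℝ} (hc : 0 < c) (hp : 1 < p) (C : ℝ) :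
    ∃ L, ∀ x, 0 ≤ x → C * x ≤ c * x ^ p + L := by
  have hpq := Real.HolderConjugate.conjExponent hp
  set a := (c * p) ^ p⁻¹
  have ha : 0 < a := by positivity
  refine ⟨(|C| / a) ^ p.conjExponent / p.conjExponent, fun x hx => ?_⟩
  calc C * x ≤ a * x * (|C| / a) := by
        rw [mul_comm a x, mul_assoc, mul_div_cancel₀ _ ha.ne', mul_comm C]
        exact mul_le_mul_of_nonneg_left (le_abs_self C) hx
    _ ≤ (a * x) ^ p / p + (|C| / a) ^ p.conjExponent / p.conjExponent :=
        Real.young_inequality_of_nonneg (by positivity) (by positivity) hpq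
    _ = c * x ^ p + (|C| / a) ^ p.conjExponent / p.conjExponent := by
        rw [Real.mul_rpow ha.le hx, Real.rpow_inv_rpow (by positivity) (by positivity)]
        field_simp

theorem norm_sub_rpow_le {E : Type*} [SeminormedAddCommGroup E] {p : ℝ} (hp : 1 ≤ p)
    (x y : E) :
    ‖x - y‖ ^ p ≤ 2 ^ (p - 1) * (‖x‖ ^ p + ‖y‖ ^ p) := by
  have h : ‖x - y‖₊ ^ p ≤ (‖x‖₊ + ‖y‖₊) ^ p :=
    NNReal.rpow_le_rpow (nnnorm_sub_le x y) (by linarith)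
  exact_mod_cast h.trans (NNReal.rpow_add_le_mul_rpow_add_rpow _ _ hp)

theorem rpow_dist_le_of_norm_le {E : Type*} [SeminormedAddCommGroup E] {p q M : ℝ}
    (hp : 1 ≤ p) (hq : 1 ≤ q) {F Fb : E} {θ θb : ℝ}
    (hFb : ‖Fb‖ ≤ M) (hθ : 0 ≤ θ) (hθb : 0 ≤ θb) (hθbM : θb ≤ M) :
    ‖F - Fb‖ ^ p + |θ - θb| ^ q ≤
      (2 ^ (p - 1) + 2 ^ (q - 1)) * (‖F‖ ^ p + θ ^ q + M ^ p + M ^ q) := by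
  have hF := norm_sub_rpow_le hp F Fb
  have hθ' := norm_sub_rpow_le hq θ θb
  rw [Real.norm_eq_abs, Real.norm_eq_abs, Real.norm_eq_abs, abs_of_nonneg hθ,
    abs_of_nonneg hθb] at hθ'
  have hFbM : ‖Fb‖ ^ p ≤ M ^ p := Real.rpow_le_rpow (norm_nonneg _) hFb (by linarith)
  have hθbM' : θb ^ q ≤ M ^ q := Real.rpow_le_rpow hθb hθbM (by linarith)
  have h2p : 0 ≤ (2 : ℝ) ^ (p - 1) := by positivity
  have h2q : 0 ≤ (2 : ℝ) ^ (q - 1) := by positivity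
  have hFp : 0 ≤ ‖F‖ ^ p := by positivity
  have hθq : 0 ≤ θ ^ q := by positivity
  have hMp : 0 ≤ M ^ p := le_trans (by positivity) hFbM
  have hMq : 0 ≤ M ^ q := le_trans (by positivity) hθbM'
  nlinarith [mul_le_mul_of_nonneg_left hFbM h2p, mul_le_mul_of_nonneg_left hθbM' h2q,
    mul_nonneg h2p (add_nonneg hθq hMq), mul_nonneg h2q (add_nonneg hFp hMp)]

theorem exists_abs_le_mul_add_of_growth {E : Type*} [NormedAddCommGroup E] [ProperSpace E]
    {p q ε : ℝ} {f : E → ℝ → ℝ}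
    (hp : 0 < p) (hq : 0 < q) (hε : 0 ≤ ε)
    (hf : ContinuousOn (fun z : E × ℝ => f z.1 z.2) (univ ×ˢ Ici 0))
    (hgrowth : ∃ R₀, ∀ F θ, 0 ≤ θ → R₀ ≤ ‖F‖ ^ p + θ ^ q →
      |f F θ| ≤ ε * (‖F‖ ^ p + θ ^ q)) :
    ∃ C, ∀ F θ, 0 ≤ θ → |f F θ| ≤ ε * (‖F‖ ^ p + θ ^ q) + C := by
  obtain ⟨R₀, hR₀⟩ := hgrowth
  obtain ⟨C, hC⟩ := ((isCompact_closedBall (0 : E) (R₀ ^ p⁻¹)).prod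
    (isCompact_Icc (a := 0) (b := R₀ ^ q⁻¹))).exists_bound_of_continuousOn
    (hf.mono fun z hz => ⟨mem_univ _, hz.2.1⟩)
  refine ⟨max C 0, fun F θ hθ => ?_⟩
  have hX : 0 ≤ ε * (‖F‖ ^ p + θ ^ q) := by positivity
  rcases le_total R₀ (‖F‖ ^ p + θ ^ q) with hR | hR
  · linarith [hR₀ F θ hθ hR, le_max_right C 0]
  · obtain ⟨hF, hθ'⟩ := le_rpow_inv_of_rpow_add_rpow_le hp hq (norm_nonneg F) hθ hR
    have := hC (F, θ) ⟨mem_closedBall_zero_iff.2 hF, hθ, hθ'⟩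
    rw [Real.norm_eq_abs] at this
    linarith [le_max_left C 0]

theorem add_mul_sub_add_sq_le_of_hasDerivAt {D : Set ℝ} (hD : Convex ℝ D) {G g g' : ℝ → ℝ}
    {μ : ℝ} (hG : ContinuousOn G D) (hg : ContinuousOn g D)
    (hG' : ∀ s ∈ interior D, HasDerivAt G (g s) s)
    (hg' : ∀ s ∈ interior D, HasDerivAt g (g' s) s) (hμ : ∀ s ∈ interior D, μ ≤ g' s)
    {a b : ℝ} (ha : a ∈ D) (hb : b ∈ D) :
    G a + g a * (b - a) + μ / 2 * (b - a) ^ 2 ≤ G b := by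
  set H : ℝ → ℝ := fun s => G s - g a * (s - a) - μ / 2 * (s - a) ^ 2
  set k : ℝ → ℝ := fun s => g s - g a - μ * (s - a)
  have hH' : ∀ s ∈ interior D, HasDerivAt H (k s) s := fun s hs =>
    (((hG' s hs).sub (((hasDerivAt_id' s).sub_const a).const_mul (g a))).sub
      ((((hasDerivAt_id' s).sub_const a).pow 2).const_mul (μ / 2))).congr_deriv
      (by simp only [k]; ring)
  have hk : MonotoneOn k D := by
    refine monotoneOn_of_hasDerivWithinAt_nonneg hD (f' := fun s => g' s - μ) (by fun_prop)
      (fun s hs => ?_) (fun s hs => sub_nonneg.2 (hμ s hs))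
    exact ((((hg' s hs).sub_const (g a)).sub
      (((hasDerivAt_id s).sub_const a).const_mul μ)).congr_deriv (by simp)).hasDerivWithinAt
  have hka : k a = 0 := by simp [k]
  have hHc : ContinuousOn H D := by fun_prop
  -- `H' = k` is monotone and vanishes at `a`, so `a` minimises `H` on `D`.
  suffices H a ≤ H b by simp only [H, sub_self, mul_zero, sub_zero] at this; linarith
  rcases le_total a b with hab | hba
  · refine monotoneOn_of_hasDerivWithinAt_nonneg (f' := k) (hD.inter (convex_Ici a))
      (hHc.mono inter_subset_left) (fun s hs => ?_) (fun s hs => ?_)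
      ⟨ha, self_mem_Ici⟩ ⟨hb, hab⟩ hab
    · rw [interior_inter] at hs
      exact (hH' s hs.1).hasDerivWithinAt
    · rw [interior_inter, interior_Ici] at hs
      rw [← hka]
      exact hk ha (interior_subset hs.1) (le_of_lt hs.2)
  · refine antitoneOn_of_hasDerivWithinAt_nonpos (f' := k) (hD.inter (convex_Iic a))
      (hHc.mono inter_subset_left) (fun s hs => ?_) (fun s hs => ?_)
      ⟨hb, hba⟩ ⟨ha, self_mem_Iic⟩ hba
    · rw [interior_inter] at hs
      exact (hH' s hs.1).hasDerivWithinAt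
    · rw [interior_inter, interior_Iic] at hs
      rw [← hka]
      exact hk (interior_subset hs.1) ha (le_of_lt hs.2)

theorem add_fderiv_add_le_of_le_fderiv_fderiv {E : Type*} [NormedAddCommGroup E]
    [NormedSpace ℝ E] {f : E → ℝ} (hf : ContDiff ℝ 2 f) {x y : E} {μ : ℝ}
    (hμ : ∀ z ∈ segment ℝ x y, μ ≤ fderiv ℝ (fderiv ℝ f) z (y - x) (y - x)) :
    f x + fderiv ℝ f x (y - x) + μ / 2 ≤ f y := by
  set V := y - x
  have hpath : ∀ t : ℝ, HasDerivAt (fun t : ℝ => x + t • V) V t := fun t => by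
    simpa using ((hasDerivAt_id t).smul_const V).const_add x
  have hG : ∀ t : ℝ, HasDerivAt (fun t : ℝ => f (x + t • V)) (fderiv ℝ f (x + t • V) V) t :=
    fun t => ((hf.differentiable two_ne_zero _).hasFDerivAt).comp_hasDerivAt t (hpath t)
  have hg : ∀ t : ℝ, HasDerivAt (fun t : ℝ => fderiv ℝ f (x + t • V) V)
      (fderiv ℝ (fderiv ℝ f) (x + t • V) V V) t := fun t =>
    ((((hf.fderiv_right (m := 1) le_rfl).differentiable one_ne_zero _).hasFDerivAt
      |>.comp_hasDerivAt t (hpath t)).clm_apply (hasDerivAt_const t V)).congr_deriv (by simp)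
  have key := add_mul_sub_add_sq_le_of_hasDerivAt (convex_Icc (0 : ℝ) 1)
    (fun t _ => (hG t).continuousAt.continuousWithinAt)
    (fun t _ => (hg t).continuousAt.continuousWithinAt) (fun t _ => hG t) (fun t _ => hg t)
    (fun t ht => hμ _ (segment_eq_image' ℝ x y ▸ ⟨t, interior_subset ht, rfl⟩))
    (left_mem_Icc.2 zero_le_one) (right_mem_Icc.2 zero_le_one)
  simpa [V] using key

theorem exists_pos_mul_sq_le_of_isCompact {X E : Type*} [TopologicalSpace X]
    [NormedAddCommGroup E] [NormedSpace ℝ E] [FiniteDimensional ℝ E] {K : Set X}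
    (hK : IsCompact K) {B : X → E →L[ℝ] E →L[ℝ] ℝ} (hB : ContinuousOn B K)
    (hpos : ∀ x ∈ K, ∀ v ≠ 0, 0 < B x v v) :
    ∃ μ > 0, ∀ x ∈ K, ∀ v, μ * ‖v‖ ^ 2 ≤ B x v v := by
  have hcont : ContinuousOn (fun w : X × E => B w.1 w.2 w.2) (K ×ˢ Metric.sphere 0 1) :=
    ((hB.comp continuousOn_fst fun w hw => hw.1).clm_apply continuousOn_snd).clm_apply
      continuousOn_snd
  obtain ⟨μ, hμ, hle⟩ := (hK.prod (isCompact_sphere 0 1)).exists_forall_le' hcont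
    fun w hw => hpos w.1 hw.1 w.2 (ne_zero_of_mem_unit_sphere ⟨w.2, hw.2⟩)
  refine ⟨μ, hμ, fun x hx v => ?_⟩
  rcases eq_or_ne v 0 with rfl | hv
  · simp
  have hv' : 0 < ‖v‖ := norm_pos_iff.2 hv
  have h := hle (x, ‖v‖⁻¹ • v) ⟨hx, by simp [norm_smul, hv'.ne']⟩
  simp only [map_smul, smul_apply, smul_eq_mul] at h
  calc μ * ‖v‖ ^ 2 ≤ ‖v‖⁻¹ * (‖v‖⁻¹ * B x v v) * ‖v‖ ^ 2 := by gcongr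
    _ = B x v v := by field_simp

section PartialDerivatives

variable {E P G : Type*} [NormedAddCommGroup E] [NormedSpace ℝ E] [NormedAddCommGroup P]
  [NormedSpace ℝ P] [NormedAddCommGroup G] [NormedSpace ℝ G] {m n : WithTop ℕ∞}

theorem ContDiffOn.fderiv_partial_left {f : E → P → G} {T : Set P}
    (hf : ContDiffOn ℝ n (fun z : E × P => f z.1 z.2) (univ ×ˢ T)) (hmn : m + 1 ≤ n) :
    ContDiffOn ℝ m (fun z : E × P => fderiv ℝ (fun x => f x z.2) z.1) (univ ×ˢ T) := by
  intro z hz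
  have hf' : ContDiffOn ℝ n (fun w : (E × P) × E => f w.2 w.1.2) ((univ ×ˢ T) ×ˢ univ) :=
    hf.comp (f := fun w : (E × P) × E => (w.2, w.1.2)) (by fun_prop)
      fun w hw => ⟨mem_univ _, hw.1.2⟩
  simpa only [fderivWithin_univ] using
    (hf' (z, z.1) ⟨hz, mem_univ _⟩).fderivWithin (f := fun w x => f x w.2) contDiffWithinAt_fst
      uniqueDiffOn_univ hmn hz (subset_univ _)

theorem ContDiffOn.fderivWithin_partial_right {f : E → P → G} {s : Set E} {t : Set P}
    (hf : ContDiffOn ℝ n (fun z : E × P => f z.1 z.2) (s ×ˢ t)) (ht : UniqueDiffOn ℝ t)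
    (hmn : m + 1 ≤ n) :
    ContDiffOn ℝ m (fun z : E × P => fderivWithin ℝ (f z.1) t z.2) (s ×ˢ t) := by
  intro z hz
  have hf' : ContDiffOn ℝ n (fun w : (E × P) × P => f w.1.1 w.2) ((s ×ˢ t) ×ˢ t) :=
    hf.comp (f := fun w : (E × P) × P => (w.1.1, w.2)) (by fun_prop)
      fun w hw => ⟨hw.1.1, hw.2⟩
  exact (hf' (z, z.2) ⟨hz, hz.2⟩).fderivWithin (f := fun w x => f w.1 x) contDiffWithinAt_snd
      ht hmn hz fun w hw => hw.2

theorem ContDiffOn.continuousOn_fderiv_fderiv_partial_left {f : E → P → G} {T : Set P}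
    (hf : ContDiffOn ℝ 2 (fun z : E × P => f z.1 z.2) (univ ×ˢ T)) :
    ContinuousOn (fun z : E × P => fderiv ℝ (fderiv ℝ (fun x => f x z.2)) z.1) (univ ×ˢ T) :=
  ((hf.fderiv_partial_left (m := 1) le_rfl).fderiv_partial_left
    (f := fun x p => fderiv ℝ (fun x => f x p) x) (m := 0) (by simp)).continuousOn

theorem ContDiffOn.continuousOn_deriv_partial_right {f : E → ℝ → G} {s : Set E} {t : Set ℝ}
    (hf : ContDiffOn ℝ 1 (fun z : E × ℝ => f z.1 z.2) (s ×ˢ t)) (ht : UniqueDiffOn ℝ t)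
    (hdiff : ∀ z ∈ s ×ˢ t, DifferentiableAt ℝ (f z.1) z.2) :
    ContinuousOn (fun z : E × ℝ => deriv (f z.1) z.2) (s ×ˢ t) := by
  refine (((hf.fderivWithin_partial_right (m := 0) ht (by simp)).continuousOn).clm_apply
    (continuousOn_const (c := (1 : ℝ)))).congr fun z hz => ?_
  rw [← (hdiff z hz).derivWithin (ht _ hz.2)]
  rfl

theorem ContDiffOn.differentiableAt_partial_right {f : E → P → G} {T : Set P}
    (hf : ContDiffOn ℝ n (fun z : E × P => f z.1 z.2) (univ ×ˢ T)) (hn : n ≠ 0) (x : E)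
    {y : P} (hy : T ∈ nhds y) : DifferentiableAt ℝ (f x) y :=
  ((hf.contDiffAt (prod_mem_nhds Filter.univ_mem hy)).comp y
    (contDiffAt_const.prodMk contDiffAt_id)).differentiableAt hn

theorem ContDiffOn.contDiff_partial_left {f : E → P → G} {T : Set P}
    (hf : ContDiffOn ℝ n (fun z : E × P => f z.1 z.2) (univ ×ˢ T)) {y : P} (hy : y ∈ T) :
    ContDiff ℝ n (fun x => f x y) :=
  contDiffOn_univ.1 <|
    hf.comp (f := fun x : E => (x, y)) (by fun_prop) fun _ _ => ⟨mem_univ _, hy⟩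

end PartialDerivatives

section ThermoelasticEnergy

variable {E W : Type*} [NormedAddCommGroup E] [InnerProductSpace ℝ E] [NormedAddCommGroup W]
  {ψ : E → ℝ → ℝ} {Sig : E → ℝ → E} {η : E → ℝ → ℝ} {p q c M : ℝ}

variable (ψ Sig η) in
noncomputable def relativeTotalEnergy (F : E) (v : W) (θ : ℝ) (Fb : E) (vb : W) (θb : ℝ) : ℝ :=
  (ψ F θ - ψ Fb θb - ⟪Sig Fb θb, F - Fb⟫ + η Fb θb * (θ - θb))
    + (η F θ - η Fb θb) * (θ - θb) + (1/2) * ‖v - vb‖ ^ 2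

theorem relativeTotalEnergy_eq_internalEnergy_sub (F : E) (v : W) (θ : ℝ) (Fb : E) (vb : W)
    (θb : ℝ) : relativeTotalEnergy ψ Sig η F v θ Fb vb θb =
      (ψ F θ + θ * η F θ) - θb * η F θ - ψ Fb θb - ⟪Sig Fb θb, F - Fb⟫
        + 1 / 2 * ‖v - vb‖ ^ 2 := by
  unfold relativeTotalEnergy; ring

theorem relativeTotalEnergy_eq_add (F : E) (v : W) (θ : ℝ) (Fb : E) (vb : W) (θb : ℝ) :
    relativeTotalEnergy ψ Sig η F v θ Fb vb θb =
      (ψ F θb - ψ Fb θb - ⟪Sig Fb θb, F - Fb⟫) + (ψ F θ - ψ F θb + η F θ * (θ - θb))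
        + 1 / 2 * ‖v - vb‖ ^ 2 := by
  unfold relativeTotalEnergy; ring

theorem exists_half_mul_sub_le_relativeTotalEnergy [FiniteDimensional ℝ E] (hp : 1 < p)
    (hq : 0 < q) (hc : 0 < c) (hM : 0 < M)
    (he : ∀ F θ, 0 ≤ θ → c * (‖F‖ ^ p + θ ^ q) - c ≤ ψ F θ + θ * η F θ)
    (hη : ∀ ε > (0:ℝ), ∃ R₀, ∀ F θ, 0 ≤ θ → R₀ ≤ ‖F‖ ^ p + θ ^ q →
      |η F θ| ≤ ε * (‖F‖ ^ p + θ ^ q))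
    (hψc : ContinuousOn (fun z : E × ℝ => ψ z.1 z.2) (univ ×ˢ Ici 0))
    (hSigc : ContinuousOn (fun z : E × ℝ => Sig z.1 z.2) (univ ×ˢ Ici 0))
    (hηc : ContinuousOn (fun z : E × ℝ => η z.1 z.2) (univ ×ˢ Ici 0)) :
    ∃ C, ∀ Fb θb, ‖Fb‖ ≤ M → 0 ≤ θb → θb ≤ M → ∀ F θ, 0 ≤ θ → ∀ v vb : W,
      c / 2 * (‖F‖ ^ p + θ ^ q) - C + 1 / 2 * ‖v - vb‖ ^ 2 ≤
        relativeTotalEnergy ψ Sig η F v θ Fb vb θb := by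
  obtain ⟨Cη, hCη⟩ := exists_abs_le_mul_add_of_growth (by linarith) hq
    (by positivity : 0 ≤ c / (4 * M)) hηc (hη _ (by positivity))
  have hΓ : IsCompact (Metric.closedBall (0 : E) M ×ˢ Icc 0 M) :=
    (isCompact_closedBall _ _).prod isCompact_Icc
  have hΓS : Metric.closedBall (0 : E) M ×ˢ Icc 0 M ⊆ univ ×ˢ Ici 0 :=
    fun z hz => ⟨mem_univ _, hz.2.1⟩
  obtain ⟨Cψ, hCψ⟩ := hΓ.exists_bound_of_continuousOn (hψc.mono hΓS)
  obtain ⟨CSig, hCSig⟩ := hΓ.exists_bound_of_continuousOn (hSigc.mono hΓS)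
  obtain ⟨L, hL⟩ := exists_mul_le_mul_rpow_add (by positivity : 0 < c / 4) hp CSig
  refine ⟨c + M * Cη + Cψ + CSig * M + L, fun Fb θb hFb hθb hθbM F θ hθ v vb => ?_⟩
  have hΓb : (Fb, θb) ∈ Metric.closedBall (0 : E) M ×ˢ Icc 0 M :=
    ⟨mem_closedBall_zero_iff.2 hFb, hθb, hθbM⟩
  have hψb : ψ Fb θb ≤ Cψ := le_of_abs_le (hCψ _ hΓb)
  have hSigb : ‖Sig Fb θb‖ ≤ CSig := hCSig _ hΓb
  have hθη : θb * η F θ ≤ c / 4 * (‖F‖ ^ p + θ ^ q) + M * Cη := calc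
    θb * η F θ ≤ M * |η F θ| := (mul_le_mul_of_nonneg_left (le_abs_self _) hθb).trans
      (mul_le_mul_of_nonneg_right hθbM (abs_nonneg _))
    _ ≤ M * (c / (4 * M) * (‖F‖ ^ p + θ ^ q) + Cη) := by gcongr; exact hCη F θ hθ
    _ = c / 4 * (‖F‖ ^ p + θ ^ q) + M * Cη := by field_simp
  have hSig : ⟪Sig Fb θb, F - Fb⟫ ≤ c / 4 * ‖F‖ ^ p + L + CSig * M := calc
    ⟪Sig Fb θb, F - Fb⟫ ≤ ‖Sig Fb θb‖ * ‖F - Fb‖ := real_inner_le_norm _ _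
    _ ≤ CSig * (‖F‖ + M) := mul_le_mul hSigb ((norm_sub_le F Fb).trans (by linarith))
        (norm_nonneg _) ((norm_nonneg _).trans hSigb)
    _ ≤ c / 4 * ‖F‖ ^ p + L + CSig * M := by linarith [hL ‖F‖ (norm_nonneg F)]
  have hθq : 0 ≤ θ ^ q := by positivity
  rw [relativeTotalEnergy_eq_internalEnergy_sub]
  linarith [he F θ hθ, mul_nonneg hc.le hθq]

theorem exists_far_field_lower_bound [FiniteDimensional ℝ E] (hp : 1 < p) (hq : 1 < q)
    (hc : 0 < c) (hM : 0 < M)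
    (he : ∀ F θ, 0 ≤ θ → c * (‖F‖ ^ p + θ ^ q) - c ≤ ψ F θ + θ * η F θ)
    (hη : ∀ ε > (0:ℝ), ∃ R₀, ∀ F θ, 0 ≤ θ → R₀ ≤ ‖F‖ ^ p + θ ^ q →
      |η F θ| ≤ ε * (‖F‖ ^ p + θ ^ q))
    (hψc : ContinuousOn (fun z : E × ℝ => ψ z.1 z.2) (univ ×ˢ Ici 0))
    (hSigc : ContinuousOn (fun z : E × ℝ => Sig z.1 z.2) (univ ×ˢ Ici 0))
    (hηc : ContinuousOn (fun z : E × ℝ => η z.1 z.2) (univ ×ˢ Ici 0)) :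
    ∃ R, ∃ K₁ > (0:ℝ), ∀ Fb (vb : W) θb, ‖Fb‖ ≤ M → ‖vb‖ ≤ M → 0 ≤ θb → θb ≤ M →
      ∀ F v θ, 0 ≤ θ → R < ‖F‖ ^ p + θ ^ q + ‖v‖ ^ 2 →
        1 / 4 * K₁ * (‖F - Fb‖ ^ p + |θ - θb| ^ q + ‖v - vb‖ ^ 2) ≤
          relativeTotalEnergy ψ Sig η F v θ Fb vb θb := by
  obtain ⟨C, hC⟩ :=
    exists_half_mul_sub_le_relativeTotalEnergy (W := W) hp (by linarith) hc hM he hη hψc hSigc hηc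
  set D : ℝ := 2 ^ (p - 1) + 2 ^ (q - 1)
  have hD : 0 < D := by positivity
  set κ : ℝ := min (c / 4) (1 / 8)
  have hκ : 0 < κ := by positivity
  set K₁ := min 1 (c / D)
  refine ⟨2 * M ^ 2 + (C + c / 4 * (M ^ p + M ^ q)) / κ, K₁, by positivity,
    fun Fb vb θb hFb hvb hθb hθbM F v θ hθ hR => ?_⟩
  have hv : ‖v‖ ^ 2 ≤ 2 * ‖v - vb‖ ^ 2 + 2 * M ^ 2 := by
    have h := (norm_le_norm_sub_add v vb).trans (add_le_add_right hvb _)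
    nlinarith [norm_nonneg v, sq_nonneg (‖v - vb‖ - M)]
  have hA : C + c / 4 * (M ^ p + M ^ q) < κ * (‖F‖ ^ p + θ ^ q + 2 * ‖v - vb‖ ^ 2) :=
    (div_lt_iff₀' hκ).1 (by linarith)
  have hκX : κ * (‖F‖ ^ p + θ ^ q) ≤ c / 4 * (‖F‖ ^ p + θ ^ q) := by gcongr; exact min_le_left _ _
  have hκw : κ * ‖v - vb‖ ^ 2 ≤ 1 / 8 * ‖v - vb‖ ^ 2 := by gcongr; exact min_le_right _ _
  have hKD : K₁ * D ≤ c := (mul_le_mul_of_nonneg_right (min_le_right _ _) hD.le).trans_eq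
    (div_mul_cancel₀ _ hD.ne')
  calc 1 / 4 * K₁ * (‖F - Fb‖ ^ p + |θ - θb| ^ q + ‖v - vb‖ ^ 2)
      ≤ 1 / 4 * K₁ * (D * (‖F‖ ^ p + θ ^ q + M ^ p + M ^ q) + ‖v - vb‖ ^ 2) := by
        gcongr; exact rpow_dist_le_of_norm_le hp.le hq.le hFb hθ hθb hθbM
    _ = 1 / 4 * (K₁ * D) * (‖F‖ ^ p + θ ^ q + M ^ p + M ^ q) + 1 / 4 * K₁ * ‖v - vb‖ ^ 2 := by
        ring
    _ ≤ 1 / 4 * c * (‖F‖ ^ p + θ ^ q + M ^ p + M ^ q) + 1 / 4 * 1 * ‖v - vb‖ ^ 2 := by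
        gcongr; exact min_le_left _ _
    _ ≤ c / 2 * (‖F‖ ^ p + θ ^ q) - C + 1 / 2 * ‖v - vb‖ ^ 2 := by linarith
    _ ≤ relativeTotalEnergy ψ Sig η F v θ Fb vb θb := hC Fb θb hFb hθb hθbM F θ hθ v vb

theorem exists_strongConvexity_fst [FiniteDimensional ℝ E]
    (hψ : ContDiffOn ℝ 2 (fun z : E × ℝ => ψ z.1 z.2) (univ ×ˢ Ici 0))
    (hSig : ∀ F θ, 0 ≤ θ → ∀ V, ⟪Sig F θ, V⟫ = fderiv ℝ (fun F' => ψ F' θ) F V)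
    (hψFF : ∀ F θ, 0 ≤ θ → ∀ V : E, V ≠ 0 →
      0 < iteratedFDeriv ℝ 2 (fun F' => ψ F' θ) F ![V, V]) (B : ℝ) :
    ∃ μ > 0, ∀ Fb F θb, ‖Fb‖ ≤ B → ‖F‖ ≤ B → 0 ≤ θb → θb ≤ B →
      μ / 2 * ‖F - Fb‖ ^ 2 ≤ ψ F θb - ψ Fb θb - ⟪Sig Fb θb, F - Fb⟫ := by
  obtain ⟨μ, hμ, hcoer⟩ := exists_pos_mul_sq_le_of_isCompact
    ((isCompact_closedBall (0 : E) B).prod (isCompact_Icc (a := 0) (b := B)))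
    (hψ.continuousOn_fderiv_fderiv_partial_left.mono fun z hz => ⟨mem_univ _, hz.2.1⟩)
    fun z hz V hV => by
      simpa [iteratedFDeriv_two_apply] using hψFF z.1 z.2 hz.2.1 V hV
  refine ⟨μ, hμ, fun Fb F θb hFb hF hθb hθbB => ?_⟩
  have h := add_fderiv_add_le_of_le_fderiv_fderiv (hψ.contDiff_partial_left hθb)
    fun z hz => hcoer (z, θb) ⟨(convex_closedBall 0 B).segment_subset
      (mem_closedBall_zero_iff.2 hFb) (mem_closedBall_zero_iff.2 hF) hz, hθb, hθbB⟩ (F - Fb)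
  rw [← hSig Fb θb hθb] at h
  linarith

theorem exists_strongConcavity_snd [FiniteDimensional ℝ E]
    (hψ : ContDiffOn ℝ 1 (fun z : E × ℝ => ψ z.1 z.2) (univ ×ˢ Ici 0))
    (hη : ContDiffOn ℝ 1 (fun z : E × ℝ => η z.1 z.2) (univ ×ˢ Ici 0))
    (hηψ : ∀ F θ, 0 ≤ θ → η F θ = - deriv (fun s => ψ F s) θ)
    (hηθ : ∀ F θ, 0 ≤ θ → 0 < deriv (fun s => η F s) θ) (B : ℝ) :
    ∃ μ > 0, ∀ F θ θb, ‖F‖ ≤ B → 0 ≤ θ → θ ≤ B → 0 ≤ θb → θb ≤ B →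
      μ / 2 * (θ - θb) ^ 2 ≤ ψ F θ - ψ F θb + η F θ * (θ - θb) := by
  -- `deriv` is `0` where `η F` is not differentiable, so `hηθ` gives differentiability at `θ = 0`.
  have hdiff : ∀ F θ, 0 ≤ θ → DifferentiableAt ℝ (η F) θ :=
    fun F θ hθ => differentiableAt_of_deriv_ne_zero (hηθ F θ hθ).ne'
  obtain ⟨μ, hμ, hle⟩ := ((isCompact_closedBall (0 : E) B).prod
    (isCompact_Icc (a := 0) (b := B))).exists_forall_le'
    ((hη.continuousOn_deriv_partial_right (uniqueDiffOn_Ici 0) fun z hz => hdiff z.1 z.2 hz.2).mono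
      fun z hz => ⟨mem_univ _, hz.2.1⟩)
    fun z hz => hηθ z.1 z.2 hz.2.1
  refine ⟨μ, hμ, fun F θ θb hF hθ hθB hθb hθbB => ?_⟩
  have h := add_mul_sub_add_sq_le_of_hasDerivAt (convex_Icc 0 B) (G := fun s => -ψ F s)
    ((hψ.continuousOn.uncurry_left (f := ψ) F (mem_univ F)).mono Icc_subset_Ici_self).neg
    ((hη.continuousOn.uncurry_left (f := η) F (mem_univ F)).mono Icc_subset_Ici_self)
    (fun s hs => ?_)
    (fun s hs => (hdiff F s (interior_subset hs).1).hasDerivAt)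
    (fun s hs => hle (F, s) ⟨mem_closedBall_zero_iff.2 hF, interior_subset hs⟩)
    ⟨hθ, hθB⟩ ⟨hθb, hθbB⟩
  · linarith
  · rw [interior_Icc] at hs
    have := ((hψ.differentiableAt_partial_right one_ne_zero F (Ici_mem_nhds hs.1)).hasDerivAt).neg
    rw [← hηψ F s hs.1.le] at this
    exact this

theorem exists_near_field_lower_bound [FiniteDimensional ℝ E]
    (hψ : ContDiffOn ℝ 2 (fun z : E × ℝ => ψ z.1 z.2) (univ ×ˢ Ici 0))
    (hη : ContDiffOn ℝ 1 (fun z : E × ℝ => η z.1 z.2) (univ ×ˢ Ici 0))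
    (hSig : ∀ F θ, 0 ≤ θ → ∀ V, ⟪Sig F θ, V⟫ = fderiv ℝ (fun F' => ψ F' θ) F V)
    (hηψ : ∀ F θ, 0 ≤ θ → η F θ = - deriv (fun s => ψ F s) θ)
    (hψFF : ∀ F θ, 0 ≤ θ → ∀ V : E, V ≠ 0 →
      0 < iteratedFDeriv ℝ 2 (fun F' => ψ F' θ) F ![V, V])
    (hηθ : ∀ F θ, 0 ≤ θ → 0 < deriv (fun s => η F s) θ) (B : ℝ) :
    ∃ K₂ > (0:ℝ), ∀ Fb (vb : W) θb F v θ, ‖Fb‖ ≤ B → 0 ≤ θb → θb ≤ B →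
      ‖F‖ ≤ B → 0 ≤ θ → θ ≤ B →
        K₂ * (‖F - Fb‖ ^ 2 + |θ - θb| ^ 2 + ‖v - vb‖ ^ 2) ≤
          relativeTotalEnergy ψ Sig η F v θ Fb vb θb := by
  obtain ⟨μ₁, hμ₁, hleft⟩ := exists_strongConvexity_fst hψ hSig hψFF B
  obtain ⟨μ₂, hμ₂, hright⟩ :=
    exists_strongConcavity_snd (hψ.of_le (by norm_num)) hη hηψ hηθ B
  set K₂ := min (μ₁ / 2) (min (μ₂ / 2) (1 / 2))
  refine ⟨K₂, by positivity, fun Fb vb θb F v θ hFb hθb hθbB hF hθ hθB => ?_⟩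
  have hK₁ : K₂ * ‖F - Fb‖ ^ 2 ≤ μ₁ / 2 * ‖F - Fb‖ ^ 2 := by
    gcongr; exact min_le_left _ _
  have hK₂ : K₂ * (θ - θb) ^ 2 ≤ μ₂ / 2 * (θ - θb) ^ 2 := by
    gcongr; exact (min_le_right _ _).trans (min_le_left _ _)
  have hK₃ : K₂ * ‖v - vb‖ ^ 2 ≤ 1 / 2 * ‖v - vb‖ ^ 2 := by
    gcongr; exact (min_le_right _ _).trans (min_le_right _ _)
  rw [relativeTotalEnergy_eq_add, sq_abs]
  linarith [hleft Fb F θb hFb hF hθb hθbB, hright F θ θb hF hθ hθB hθb hθbB]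

end ThermoelasticEnergy

theorem relative_total_energy_distance_like_bound_general
    (d : ℕ) (p q : ℝ) (hp : 1 < p) (hq : 1 < q)
    (ψ : EuclideanSpace ℝ (Fin d × Fin d) → ℝ → ℝ)
    (Sig : EuclideanSpace ℝ (Fin d × Fin d) → ℝ → EuclideanSpace ℝ (Fin d × Fin d))
    (η : EuclideanSpace ℝ (Fin d × Fin d) → ℝ → ℝ)
    -- regularity: ψ ∈ C³, η, Σ ∈ C² on ℝ^{d×d} × [0,∞)
    (hψreg : ContDiffOn ℝ 3 (fun z : EuclideanSpace ℝ (Fin d × Fin d) × ℝ => ψ z.1 z.2)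
      (Set.univ ×ˢ Set.Ici 0))
    (hηreg : ContDiffOn ℝ 2 (fun z : EuclideanSpace ℝ (Fin d × Fin d) × ℝ => η z.1 z.2)
      (Set.univ ×ˢ Set.Ici 0))
    (hSigreg : ContDiffOn ℝ 2 (fun z : EuclideanSpace ℝ (Fin d × Fin d) × ℝ => Sig z.1 z.2)
      (Set.univ ×ˢ Set.Ici 0))
    -- constitutive relations: Σ = ∂ψ/∂F, η = −∂ψ/∂θ (and e = ψ + θη)
    (hconstSig : ∀ F θ, 0 ≤ θ → ∀ V, ⟪Sig F θ, V⟫ = fderiv ℝ (fun F' => ψ F' θ) F V)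
    (hconstη : ∀ F θ, 0 ≤ θ → η F θ = - deriv (fun s => ψ F s) θ)
    -- Gibbs thermodynamic stability: ψ_FF > 0 and η_θ > 0
    (hGibbsF : ∀ F θ, 0 ≤ θ → ∀ V : EuclideanSpace ℝ (Fin d × Fin d), V ≠ 0 →
      0 < iteratedFDeriv ℝ 2 (fun F' => ψ F' θ) F ![V, V])
    (hGibbsθ : ∀ F θ, 0 ≤ θ → 0 < deriv (fun s => η F s) θ)
    -- (a1): growth of the internal energy e = ψ + θ η
    (c : ℝ) (hc : 0 < c)
    (ha1 : ∀ F θ, 0 ≤ θ →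
      c * (‖F‖ ^ p + θ ^ q) - c ≤ ψ F θ + θ * η F θ ∧
      ψ F θ + θ * η F θ ≤ c * (‖F‖ ^ p + θ ^ q) + c)
    -- (a3): |η(F,θ)|/(|F|^p + θ^q) → 0
    (ha3 : ∀ ε > (0:ℝ), ∃ R₀, ∀ F θ, 0 ≤ θ → R₀ ≤ ‖F‖ ^ p + θ ^ q →
      |η F θ| ≤ ε * (‖F‖ ^ p + θ ^ q))
    -- the compact set Γ_{M,δ}
    (M δ : ℝ) (hM : 0 < M) (hδ : 0 < δ) :
    ∃ R : ℝ, ∃ K₁ > (0:ℝ), ∃ K₂ > (0:ℝ),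
      ∀ (Fb : EuclideanSpace ℝ (Fin d × Fin d)) (vb : EuclideanSpace ℝ (Fin d)) (θb : ℝ),
        ‖Fb‖ ≤ M → ‖vb‖ ≤ M → δ ≤ θb → θb ≤ M →
        ∀ (F : EuclideanSpace ℝ (Fin d × Fin d)) (v : EuclideanSpace ℝ (Fin d)) (θ : ℝ),
          0 ≤ θ →
          (R < ‖F‖ ^ p + θ ^ q + ‖v‖ ^ 2 →
            (1/4) * K₁ * (‖F - Fb‖ ^ p + |θ - θb| ^ q + ‖v - vb‖ ^ 2) ≤
              (ψ F θ - ψ Fb θb - ⟪Sig Fb θb, F - Fb⟫ + η Fb θb * (θ - θb))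
                + (η F θ - η Fb θb) * (θ - θb) + (1/2) * ‖v - vb‖ ^ 2) ∧
          (‖F‖ ^ p + θ ^ q + ‖v‖ ^ 2 ≤ R →
            K₂ * (‖F - Fb‖ ^ 2 + |θ - θb| ^ 2 + ‖v - vb‖ ^ 2) ≤
              (ψ F θ - ψ Fb θb - ⟪Sig Fb θb, F - Fb⟫ + η Fb θb * (θ - θb))
                + (η F θ - η Fb θb) * (θ - θb) + (1/2) * ‖v - vb‖ ^ 2) := by
  obtain ⟨R, K₁, hK₁, hfar⟩ := exists_far_field_lower_bound (W := EuclideanSpace ℝ (Fin d))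
    hp hq hc hM (fun F θ hθ => (ha1 F θ hθ).1) ha3 hψreg.continuousOn hSigreg.continuousOn
    hηreg.continuousOn
  set B := max M (max (R ^ p⁻¹) (R ^ q⁻¹))
  obtain ⟨K₂, hK₂, hnear⟩ := exists_near_field_lower_bound (W := EuclideanSpace ℝ (Fin d))
    (hψreg.of_le (by norm_num)) (hηreg.of_le (by norm_num)) hconstSig hconstη hGibbsF hGibbsθ B
  refine ⟨R, K₁, hK₁, K₂, hK₂, fun Fb vb θb hFb hvb hδθb hθbM F v θ hθ =>
    ⟨hfar Fb vb θb hFb hvb (hδ.le.trans hδθb) hθbM F v θ hθ, fun hR => ?_⟩⟩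
  obtain ⟨hFR, hθR⟩ := le_rpow_inv_of_rpow_add_rpow_le (by linarith) (by linarith)
    (norm_nonneg F) hθ (by linarith [sq_nonneg ‖v‖] : ‖F‖ ^ p + θ ^ q ≤ R)
  have hMB : M ≤ B := le_max_left _ _
  have hRpB : R ^ p⁻¹ ≤ B := (le_max_left _ _).trans (le_max_right _ _)
  have hRqB : R ^ q⁻¹ ≤ B := (le_max_right _ _).trans (le_max_right _ _)
  exact hnear Fb vb θb F v θ (hFb.trans hMB) (hδ.le.trans hδθb) (hθbM.trans hMB)
    (hFR.trans hRpB) hθ (hθR.trans hRqB)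

/-- **Lemma 5.2 (iv): distance-like lower bound for the relative total energy.**
For `(F̄,v̄,θ̄) ∈ Γ_{M,δ}`, under the constitutive relations, the Gibbs conditions and
the growth hypotheses (a1)–(a3), there are constants `R`, `K₁`, `K₂` such that
`I ≥ ¼K₁(|F−F̄|^p + |θ−θ̄|^q + |v−v̄|²)` when `|F|^p + θ^q + |v|² > R`, and
`I ≥ K₂(|F−F̄|² + |θ−θ̄|² + |v−v̄|²)` when `|F|^p + θ^q + |v|² ≤ R`. -/
theorem relative_total_energy_distance_like_bound
    (d : ℕ) (p q : ℝ) (hp : 1 < p) (hq : 1 < q)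
    (ψ : EuclideanSpace ℝ (Fin d × Fin d) → ℝ → ℝ)
    (Sig : EuclideanSpace ℝ (Fin d × Fin d) → ℝ → EuclideanSpace ℝ (Fin d × Fin d))
    (η : EuclideanSpace ℝ (Fin d × Fin d) → ℝ → ℝ)
    -- regularity: ψ ∈ C³, η, Σ ∈ C² on ℝ^{d×d} × [0,∞)
    (hψreg : ContDiffOn ℝ 3 (fun z : EuclideanSpace ℝ (Fin d × Fin d) × ℝ => ψ z.1 z.2)
      (Set.univ ×ˢ Set.Ici 0))
    (hηreg : ContDiffOn ℝ 2 (fun z : EuclideanSpace ℝ (Fin d × Fin d) × ℝ => η z.1 z.2)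
      (Set.univ ×ˢ Set.Ici 0))
    (hSigreg : ContDiffOn ℝ 2 (fun z : EuclideanSpace ℝ (Fin d × Fin d) × ℝ => Sig z.1 z.2)
      (Set.univ ×ˢ Set.Ici 0))
    -- constitutive relations: Σ = ∂ψ/∂F, η = −∂ψ/∂θ (and e = ψ + θη)
    (hconstSig : ∀ F θ, 0 ≤ θ → ∀ V, ⟪Sig F θ, V⟫ = fderiv ℝ (fun F' => ψ F' θ) F V)
    (hconstη : ∀ F θ, 0 ≤ θ → η F θ = - deriv (fun s => ψ F s) θ)
    -- Gibbs thermodynamic stability: ψ_FF > 0 and η_θ > 0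
    (hGibbsF : ∀ F θ, 0 ≤ θ → ∀ V : EuclideanSpace ℝ (Fin d × Fin d), V ≠ 0 →
      0 < iteratedFDeriv ℝ 2 (fun F' => ψ F' θ) F ![V, V])
    (hGibbsθ : ∀ F θ, 0 ≤ θ → 0 < deriv (fun s => η F s) θ)
    -- (a1): growth of the internal energy e = ψ + θ η
    (c : ℝ) (hc : 0 < c)
    (ha1 : ∀ F θ, 0 ≤ θ →
      c * (‖F‖ ^ p + θ ^ q) - c ≤ ψ F θ + θ * η F θ ∧
      ψ F θ + θ * η F θ ≤ c * (‖F‖ ^ p + θ ^ q) + c)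
    -- (a2): |Σ(F,θ)|/(|F|^p + θ^q) → 0
    (ha2 : ∀ ε > (0:ℝ), ∃ R₀, ∀ F θ, 0 ≤ θ → R₀ ≤ ‖F‖ ^ p + θ ^ q →
      ‖Sig F θ‖ ≤ ε * (‖F‖ ^ p + θ ^ q))
    -- (a3): |η(F,θ)|/(|F|^p + θ^q) → 0
    (ha3 : ∀ ε > (0:ℝ), ∃ R₀, ∀ F θ, 0 ≤ θ → R₀ ≤ ‖F‖ ^ p + θ ^ q →
      |η F θ| ≤ ε * (‖F‖ ^ p + θ ^ q))
    -- the compact set Γ_{M,δ}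
    (M δ : ℝ) (hM : 0 < M) (hδ : 0 < δ) :
    ∃ R : ℝ, ∃ K₁ > (0:ℝ), ∃ K₂ > (0:ℝ),
      ∀ (Fb : EuclideanSpace ℝ (Fin d × Fin d)) (vb : EuclideanSpace ℝ (Fin d)) (θb : ℝ),
        ‖Fb‖ ≤ M → ‖vb‖ ≤ M → δ ≤ θb → θb ≤ M →
        ∀ (F : EuclideanSpace ℝ (Fin d × Fin d)) (v : EuclideanSpace ℝ (Fin d)) (θ : ℝ),
          0 ≤ θ →
          (R < ‖F‖ ^ p + θ ^ q + ‖v‖ ^ 2 →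
            (1/4) * K₁ * (‖F - Fb‖ ^ p + |θ - θb| ^ q + ‖v - vb‖ ^ 2) ≤
              (ψ F θ - ψ Fb θb - ⟪Sig Fb θb, F - Fb⟫ + η Fb θb * (θ - θb))
                + (η F θ - η Fb θb) * (θ - θb) + (1/2) * ‖v - vb‖ ^ 2) ∧
          (‖F‖ ^ p + θ ^ q + ‖v‖ ^ 2 ≤ R →
            K₂ * (‖F - Fb‖ ^ 2 + |θ - θb| ^ 2 + ‖v - vb‖ ^ 2) ≤
              (ψ F θ - ψ Fb θb - ⟪Sig Fb θb, F - Fb⟫ + η Fb θb * (θ - θb))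
                + (η F θ - η Fb θb) * (θ - θb) + (1/2) * ‖v - vb‖ ^ 2) :=
  relative_total_energy_distance_like_bound_general d p q hp hq ψ Sig η hψreg hηreg hSigreg
    hconstSig hconstη hGibbsF hGibbsθ c hc ha1 ha3 M δ hM hδ
end

section
/- Lower bounds for the relative entropy (Lemma A.1, first bound): Let hypotheses (H1), (H2), (H3) and the growth assumptions (A1), (A2), (A3) be satisfied, and let ū ∈ B_M = {u ∈ ℝ^n : |u| ≤ M}. Then there exist R > M and constants c₁, c₂ > 0 depending on M such that η(u|ū) ≥ c₁ |A(u) − A(ū)|² whenever |u| ≤ R and |ū| ≤ M, and η(u|ū) ≥ c₂ η(u) whenever |u| ≥ R and |ū| ≤ M. -/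
/-!
Write `v = A u`, `v̄ = A ū`. By (H2) the gradient of `H = η ∘ A⁻¹` is `G ∘ A⁻¹`, so `η(u|ū)` is the
Bregman divergence `H v - H v̄ - ⟪∇H v̄, v - v̄⟫`. Differentiating (H2) once more shows that the form
in (H3) is `⟪DG ξ, DA ξ⟫`, hence `D(G ∘ A⁻¹)` is uniformly coercive over a compact set, and Taylor's
formula along the segment `[v̄, v]` gives the quadratic lower bound for `|u| ≤ R`. For `|u| ≥ R`
the terms `η ū`, `G ū`, `A ū` stay bounded, (A1) makes `η u` large and (A3) makes
`⟪G ū, A u⟫ ≤ η u / 2`, which leaves `η(u|ū) ≥ η u / 4`.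
-/

open scoped RealInnerProductSpace

noncomputable section

open Filter Set Function Bornology

theorem half_mul_le_sub_sub_of_hasDerivAt {φ ψ ψ' : ℝ → ℝ} {μ : ℝ}
    (hφ : ∀ t, HasDerivAt φ (ψ t) t) (hψ : ∀ t, HasDerivAt ψ (ψ' t) t)
    (hμ : ∀ t ∈ Icc (0 : ℝ) 1, μ ≤ ψ' t) :
    μ / 2 ≤ φ 1 - φ 0 - ψ 0 := by
  have mono : ∀ {f f' : ℝ → ℝ}, (∀ t, HasDerivAt f (f' t) t) →
      (∀ t ∈ Icc (0 : ℝ) 1, 0 ≤ f' t) → ∀ t ∈ Icc (0 : ℝ) 1, f 0 ≤ f t := fun hf hf' t ht =>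
    monotoneOn_of_hasDerivWithinAt_nonneg (convex_Icc 0 1)
      (fun t _ => (hf t).continuousAt.continuousWithinAt) (fun t _ => (hf t).hasDerivWithinAt)
      (fun t ht => hf' t (interior_subset ht)) (left_mem_Icc.2 zero_le_one) ht ht.1
  have hψ_ge : ∀ t ∈ Icc (0 : ℝ) 1, ψ 0 + μ * t ≤ ψ t := fun t ht => by
    have := mono (fun t => (hψ t).sub ((hasDerivAt_id t).const_mul μ))
      (fun t ht => by simpa using hμ t ht) t ht
    simp only [id_eq, Pi.sub_apply, mul_zero, sub_zero] at this
    linarith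
  have := mono (f := fun t => φ t - ψ 0 * t - μ / 2 * t ^ 2)
    (fun t => ((hφ t).sub ((hasDerivAt_id t).const_mul (ψ 0))).sub
      ((hasDerivAt_pow 2 t).const_mul (μ / 2)))
    (fun t ht => by
      simp only [mul_one, Nat.cast_ofNat, Nat.add_one_sub_one, pow_one, sub_nonneg]
      linarith [hψ_ge t ht])
    1 (right_mem_Icc.2 zero_le_one)
  simp only [mul_zero, sub_zero, ne_eq, OfNat.ofNat_ne_zero, not_false_eq_true, zero_pow,
    mul_one, one_pow] at this
  linarith

theorem half_mul_sq_le_sub_sub_inner {F : Type*} [NormedAddCommGroup F] [InnerProductSpace ℝ F]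
    {f : F → ℝ} {g : F → F} {g' : F → F →L[ℝ] F} {s : Set F} {m : ℝ} (hs : Convex ℝ s)
    (hf : ∀ v, HasFDerivAt f (innerSL ℝ (g v)) v) (hg : ∀ v, HasFDerivAt g (g' v) v)
    (hm : ∀ v ∈ s, ∀ ζ, m * ‖ζ‖ ^ 2 ≤ ⟪g' v ζ, ζ⟫) {x y : F} (hx : x ∈ s) (hy : y ∈ s) :
    m / 2 * ‖y - x‖ ^ 2 ≤ f y - f x - ⟪g x, y - x⟫ := by
  have hline : ∀ t : ℝ, HasDerivAt (fun t : ℝ => x + t • (y - x)) (y - x) t := fun t => by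
    simpa using ((hasDerivAt_id t).smul_const (y - x)).const_add x
  have := half_mul_le_sub_sub_of_hasDerivAt (φ := fun t => f (x + t • (y - x)))
    (ψ := fun t => ⟪g (x + t • (y - x)), y - x⟫)
    (ψ' := fun t => ⟪g' (x + t • (y - x)) (y - x), y - x⟫) (μ := m * ‖y - x‖ ^ 2)
    (fun t => by
      have := (hf _).comp_hasDerivAt t (hline t)
      simp only [innerSL_apply_apply] at this
      exact this)
    (fun t => by
      simpa using ((hg _).comp_hasDerivAt t (hline t)).inner ℝ (hasDerivAt_const t (y - x)))
    (fun t ht => hm _ (hs.add_smul_sub_mem hx hy ht) _)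
  simp only [one_smul, add_sub_cancel, zero_smul, add_zero] at this
  linarith

theorem IsCompact.exists_pos_mul_sq_le {X E : Type*} [TopologicalSpace X] [NormedAddCommGroup E]
    [NormedSpace ℝ E] [ProperSpace E] {K : Set X} (hK : IsCompact K) {Q : X → E → ℝ}
    (hQ : Continuous (uncurry Q)) (hhom : ∀ x ξ (t : ℝ), Q x (t • ξ) = t ^ 2 * Q x ξ)
    (hpos : ∀ x ∈ K, ∀ ξ ≠ 0, 0 < Q x ξ) :
    ∃ m > 0, ∀ x ∈ K, ∀ ξ, m * ‖ξ‖ ^ 2 ≤ Q x ξ := by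
  obtain ⟨m, hm, hmQ⟩ := (hK.prod (isCompact_sphere (0 : E) 1)).exists_forall_le'
    hQ.continuousOn (a := 0) fun z hz => hpos z.1 hz.1 z.2 (ne_zero_of_mem_unit_sphere ⟨z.2, hz.2⟩)
  refine ⟨m, hm, fun x hx ξ => ?_⟩
  rcases eq_or_ne ξ 0 with rfl | hξ
  · simpa using (hhom x 0 0).ge
  · have hunit : ‖ξ‖⁻¹ • ξ ∈ Metric.sphere (0 : E) 1 := by
      simp [norm_smul, inv_mul_cancel₀ (norm_ne_zero_iff.2 hξ)]
    have hQξ : Q x ξ = ‖ξ‖ ^ 2 * Q x (‖ξ‖⁻¹ • ξ) := by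
      rw [← hhom, smul_inv_smul₀ (norm_ne_zero_iff.2 hξ)]
    rw [hQξ, mul_comm]
    exact mul_le_mul_of_nonneg_left (hmQ (x, _) ⟨hx, hunit⟩) (sq_nonneg _)

theorem exists_hasFDerivAt_invFun {E F : Type*} [NormedAddCommGroup E] [NormedSpace ℝ E]
    [CompleteSpace E] [NormedAddCommGroup F] [NormedSpace ℝ F] [CompleteSpace F] {A : E → F}
    (hA : ContDiff ℝ 1 A) (hAbij : Bijective A) (hDA : ∀ x, Bijective (fderiv ℝ A x)) (v : F) :
    ∃ D : F →L[ℝ] E, HasFDerivAt (invFun A) D v ∧ ∀ ζ, fderiv ℝ A (invFun A v) (D ζ) = ζ := by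
  obtain ⟨x, rfl⟩ := hAbij.2 v
  let e := ContinuousLinearEquiv.ofBijective (fderiv ℝ A x)
    (LinearMap.ker_eq_bot.2 (hDA x).1) (LinearMap.range_eq_top.2 (hDA x).2)
  have hstrict : HasStrictFDerivAt A (e : E →L[ℝ] F) x := by
    simpa only [e, ContinuousLinearEquiv.coe_ofBijective] using hA.hasStrictFDerivAt one_ne_zero
  refine ⟨e.symm, (hstrict.to_local_left_inverse
    (Eventually.of_forall (leftInverse_invFun hAbij.1))).hasFDerivAt, fun ζ => ?_⟩
  rw [leftInverse_invFun hAbij.1 x]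
  exact e.apply_symm_apply ζ

theorem tendsto_cobounded_atTop_of_rpow_le {E : Type*} [NormedAddCommGroup E] {η : E → ℝ}
    {p β B : ℝ} (hp : 0 < p) (hβ : 0 < β) (hη : ∀ w, β * (‖w‖ ^ p + 1) - B ≤ η w) :
    Tendsto η (cobounded E) atTop :=
  tendsto_atTop_mono (fun w => by simp only [comp_apply]; linarith [hη w]) <|
    tendsto_atTop_add_const_right _ (-B) <| (tendsto_atTop_add_const_right _ 1 <|
      (tendsto_rpow_atTop hp).comp tendsto_norm_cobounded_atTop).const_mul_atTop hβ

theorem inner_fderiv_apply_fderiv_apply_eq {E F : Type*} [NormedAddCommGroup E]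
    [NormedSpace ℝ E] [NormedAddCommGroup F] [InnerProductSpace ℝ F] {η : E → ℝ} {A G : E → F}
    (hη : ContDiff ℝ 2 η) (hA : ContDiff ℝ 2 A) (hG : Differentiable ℝ G)
    (hηAG : ∀ w ξ, fderiv ℝ η w ξ = ⟪G w, fderiv ℝ A w ξ⟫) (w ξ : E) :
    ⟪fderiv ℝ G w ξ, fderiv ℝ A w ξ⟫ =
      iteratedFDeriv ℝ 2 η w ![ξ, ξ] - ⟪G w, iteratedFDeriv ℝ 2 A w ![ξ, ξ]⟫ := by
  have hη' := (hη.fderiv_right (m := 1) le_rfl).differentiable one_ne_zero w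
  have hA' := (hA.fderiv_right (m := 1) le_rfl).differentiable one_ne_zero w
  have h := congrArg (fun f => fderiv ℝ f w ξ)
    (funext fun w => hηAG w ξ : (fun w => fderiv ℝ η w ξ) = fun w => ⟪G w, fderiv ℝ A w ξ⟫)
  rw [fderiv_clm_apply hη' (differentiableAt_const ξ), fderiv_inner_apply (𝕜 := ℝ) (hG w)
    (hA'.clm_apply (differentiableAt_const ξ)), fderiv_clm_apply hA' (differentiableAt_const ξ)] at h
  simp only [fderiv_fun_const, Pi.zero_apply, ContinuousLinearMap.comp_zero, zero_add,
    ContinuousLinearMap.flip_apply] at h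
  simp only [iteratedFDeriv_two_apply, Matrix.cons_val_zero, Matrix.cons_val_one]
  linarith

def relEntropy {E F : Type*} [NormedAddCommGroup F] [InnerProductSpace ℝ F] (η : E → ℝ)
    (A G : E → F) (u ū : E) : ℝ :=
  η u - η ū - ⟪G ū, A u - A ū⟫

section RelEntropy

variable {E F : Type*} [NormedAddCommGroup F] [InnerProductSpace ℝ F] {η : E → ℝ} {A G : E → F}

theorem sub_le_relEntropy (u ū : E) :
    η u - |η ū| - ‖G ū‖ * (‖A u‖ + ‖A ū‖) ≤ relEntropy η A G u ū := by
  have := (real_inner_le_norm (G ū) (A u - A ū)).trans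
    (mul_le_mul_of_nonneg_left (norm_sub_le (A u) (A ū)) (norm_nonneg _))
  unfold relEntropy
  linarith [le_abs_self (η ū)]

theorem IsCompact.eventually_le_relEntropy [TopologicalSpace E] {l : Filter E} {S : Set E}
    (hS : IsCompact S) (hη : ContinuousOn η S) (hA : ContinuousOn A S) (hG : ContinuousOn G S)
    (hηl : Tendsto η l atTop) (hAl : ∀ ε > 0, ∀ᶠ u in l, ‖A u‖ ≤ ε * η u) :
    ∀ᶠ u in l, ∀ ū ∈ S, η u / 4 ≤ relEntropy η A G u ū := by
  obtain ⟨Cη, hCη⟩ := hS.exists_bound_of_continuousOn hη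
  obtain ⟨CA, hCA⟩ := hS.exists_bound_of_continuousOn hA
  obtain ⟨CG, hCG⟩ := hS.exists_bound_of_continuousOn hG
  set C := max (max Cη CA) (max CG 1)
  have hC : 0 < C := one_pos.trans_le ((le_max_right _ _).trans (le_max_right _ _))
  filter_upwards [hηl.eventually_ge_atTop (4 * (C + C * C)), hAl (1 / (2 * C)) (by positivity)]
    with u hηu hAu ū hū
  have hηū : |η ū| ≤ C := (hCη ū hū).trans ((le_max_left _ _).trans (le_max_left _ _))
  have hAū : ‖A ū‖ ≤ C := (hCA ū hū).trans ((le_max_right _ _).trans (le_max_left _ _))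
  have hGū : ‖G ū‖ ≤ C := (hCG ū hū).trans ((le_max_left _ _).trans (le_max_right _ _))
  have hcross : ‖G ū‖ * (‖A u‖ + ‖A ū‖) ≤ η u / 2 + C * C := calc
    _ ≤ C * (1 / (2 * C) * η u + C) := by gcongr
    _ = η u / 2 + C * C := by field_simp
  linarith [sub_le_relEntropy (η := η) (A := A) (G := G) u ū]

theorem IsCompact.exists_pos_mul_sq_le_relEntropy [NormedAddCommGroup E] [NormedSpace ℝ E]
    [FiniteDimensional ℝ E] [FiniteDimensional ℝ F] (hA : ContDiff ℝ 1 A) (hAbij : Bijective A)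
    (hDA : ∀ x, Bijective (fderiv ℝ A x)) (hη : Differentiable ℝ η) (hG : ContDiff ℝ 1 G)
    (hηAG : ∀ w ξ, fderiv ℝ η w ξ = ⟪G w, fderiv ℝ A w ξ⟫)
    (hQ : ∀ w ξ, ξ ≠ 0 → 0 < ⟪fderiv ℝ G w ξ, fderiv ℝ A w ξ⟫) {S : Set E} (hS : IsCompact S) :
    ∃ c > 0, ∀ u ∈ S, ∀ ū ∈ S, c * ‖A u - A ū‖ ^ 2 ≤ relEntropy η A G u ū := by
  choose D hD hAD using exists_hasFDerivAt_invFun hA hAbij hDA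
  obtain ⟨r, hr⟩ := (hS.image hA.continuous).isBounded.subset_closedBall 0
  have hK : IsCompact (invFun A '' Metric.closedBall 0 r) :=
    (isCompact_closedBall 0 r).image (continuous_iff_continuousAt.2 fun v => (hD v).continuousAt)
  obtain ⟨m, hm, hmQ⟩ := hK.exists_pos_mul_sq_le
    (Q := fun x ξ => ⟪fderiv ℝ G x ξ, fderiv ℝ A x ξ⟫)
    (((hG.continuous_fderiv one_ne_zero).fst'.clm_apply continuous_snd).inner
      ((hA.continuous_fderiv one_ne_zero).fst'.clm_apply continuous_snd))
    (fun x ξ t => by simp only [map_smul, real_inner_smul_right, real_inner_smul_left]; ring)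
    (fun x _ ξ hξ => hQ x ξ hξ)
  obtain ⟨L, hL⟩ := hK.exists_bound_of_continuousOn (hA.continuous_fderiv one_ne_zero).continuousOn
  set L' := max L 1
  have hcoer : ∀ v ∈ Metric.closedBall (0 : F) r, ∀ ζ,
      m / L' ^ 2 * ‖ζ‖ ^ 2 ≤ ⟪(fderiv ℝ G (invFun A v)).comp (D v) ζ, ζ⟫ := by
    intro v hv ζ
    have hx : invFun A v ∈ invFun A '' Metric.closedBall 0 r := mem_image_of_mem _ hv
    have hζ : ‖ζ‖ ≤ L' * ‖D v ζ‖ := calc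
      ‖ζ‖ = ‖fderiv ℝ A (invFun A v) (D v ζ)‖ := by rw [hAD]
      _ ≤ ‖fderiv ℝ A (invFun A v)‖ * ‖D v ζ‖ := ContinuousLinearMap.le_opNorm _ _
      _ ≤ L' * ‖D v ζ‖ := by gcongr; exact (hL _ hx).trans (le_max_left _ _)
    have hQ := hmQ _ hx (D v ζ)
    rw [hAD] at hQ
    rw [div_mul_eq_mul_div, div_le_iff₀ (by positivity)]
    calc m * ‖ζ‖ ^ 2 ≤ m * (L' * ‖D v ζ‖) ^ 2 := by gcongr
      _ = m * ‖D v ζ‖ ^ 2 * L' ^ 2 := by ring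
      _ ≤ _ := by gcongr; exact hQ
  refine ⟨m / L' ^ 2 / 2, by positivity, fun u hu ū hū => ?_⟩
  have := half_mul_sq_le_sub_sub_inner (f := η ∘ invFun A) (g := G ∘ invFun A)
    (convex_closedBall 0 r)
    (fun v => ((hη _).hasFDerivAt.comp v (hD v)).congr_fderiv (by ext ζ; simp [hηAG, hAD]))
    (fun v => (hG.differentiable one_ne_zero _).hasFDerivAt.comp v (hD v)) hcoer
    (hr (mem_image_of_mem A hū)) (hr (mem_image_of_mem A hu))
  simpa [relEntropy, leftInverse_invFun hAbij.1 _] using this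

end RelEntropy

theorem relative_entropy_lower_bounds_general
    (n : ℕ) (p : ℝ) (hp : 1 < p)
    (A : EuclideanSpace ℝ (Fin n) → EuclideanSpace ℝ (Fin n))
    (η : EuclideanSpace ℝ (Fin n) → ℝ)
    (G : EuclideanSpace ℝ (Fin n) → EuclideanSpace ℝ (Fin n))
    -- smoothness of the constitutive functions
    (hAreg : ContDiff ℝ 2 A)
    (hηreg : ContDiff ℝ (⊤ : ℕ∞) η)
    (hGreg : ContDiff ℝ (⊤ : ℕ∞) G)
    -- (H1): A is globally invertible with nonsingular differential
    (hH1 : Function.Bijective A)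
    (hH1' : ∀ w, Function.Bijective (fderiv ℝ A w))
    -- (H2): entropy pair with multiplier G
    (hH2η : ∀ w ξ, fderiv ℝ η w ξ = ⟪G w, fderiv ℝ A w ξ⟫)
    -- (H3): ∇²η(u) − G(u)·∇²A(u) is positive definite
    (hH3 : ∀ w (ξ : EuclideanSpace ℝ (Fin n)), ξ ≠ 0 →
      0 < iteratedFDeriv ℝ 2 η w ![ξ, ξ] - ⟪G w, iteratedFDeriv ℝ 2 A w ![ξ, ξ]⟫)
    -- (A1): growth of the entropy
    (β₁ β₂ B : ℝ) (hβ₁ : 0 < β₁)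
    (hA1 : ∀ w : EuclideanSpace ℝ (Fin n),
      β₁ * (‖w‖ ^ p + 1) - B ≤ η w ∧ η w ≤ β₂ * (‖w‖ ^ p + 1))
    -- (A3): |A(u)|/η(u) = o(1) as |u| → ∞
    (hA3 : ∀ ε > (0:ℝ), ∃ R₀, ∀ w : EuclideanSpace ℝ (Fin n),
      R₀ ≤ ‖w‖ → ‖A w‖ ≤ ε * η w)
    (M : ℝ) :
    ∃ R > M, ∃ c₁ > (0:ℝ), ∃ c₂ > (0:ℝ),
      ∀ u ubar : EuclideanSpace ℝ (Fin n), ‖ubar‖ ≤ M →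
        (‖u‖ ≤ R →
          c₁ * ‖A u - A ubar‖ ^ 2 ≤ η u - η ubar - ⟪G ubar, A u - A ubar⟫) ∧
        (R ≤ ‖u‖ →
          c₂ * η u ≤ η u - η ubar - ⟪G ubar, A u - A ubar⟫) := by
  have hη2 : ContDiff ℝ 2 η := hηreg.of_le (by norm_cast)
  have hG1 : ContDiff ℝ 1 G := hGreg.of_le (by norm_cast)
  have hQ : ∀ w ξ, ξ ≠ 0 → 0 < ⟪fderiv ℝ G w ξ, fderiv ℝ A w ξ⟫ := fun w ξ hξ => by
    rw [inner_fderiv_apply_fderiv_apply_eq hη2 hAreg (hG1.differentiable one_ne_zero) hH2η]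
    exact hH3 w ξ hξ
  obtain ⟨R₀, -, hfar⟩ := hasBasis_cobounded_norm.eventually_iff.1 <|
    (isCompact_closedBall 0 M).eventually_le_relEntropy hηreg.continuous.continuousOn
      hAreg.continuous.continuousOn hGreg.continuous.continuousOn
      (tendsto_cobounded_atTop_of_rpow_le (zero_lt_one.trans hp) hβ₁ fun w => (hA1 w).1)
      fun ε hε => hasBasis_cobounded_norm.eventually_iff.2 <| by simpa using hA3 ε hε
  set R := max R₀ (M + 1)
  obtain ⟨c₁, hc₁, hnear⟩ := (isCompact_closedBall 0 R).exists_pos_mul_sq_le_relEntropy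
    (hAreg.of_le one_le_two) hH1 hH1' (hη2.differentiable two_ne_zero) hG1 hH2η hQ
  have hMR : M < R := (lt_add_one M).trans_le (le_max_right _ _)
  refine ⟨R, hMR, c₁, hc₁, 1 / 4, by norm_num, fun u ubar hubar => ⟨fun hu => ?_, fun hu => ?_⟩⟩
  · exact hnear u (mem_closedBall_zero_iff.2 hu) ubar
      (mem_closedBall_zero_iff.2 (hubar.trans hMR.le))
  · have := hfar ((le_max_left _ _).trans hu) ubar (mem_closedBall_zero_iff.2 hubar)
    unfold relEntropy at this
    linarith

/-- **Lemma A.1, first bound (lower bounds for the relative entropy).**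
Under hypotheses (H1), (H2), (H3) and the growth assumptions (A1), (A2), (A3),
for `ū ∈ B_M` there exist `R > M` and constants `c₁, c₂ > 0` (depending on `M`)
such that `η(u|ū) ≥ c₁ |A(u) − A(ū)|²` for `|u| ≤ R`, and `η(u|ū) ≥ c₂ η(u)` for `|u| ≥ R`,
where `η(u|ū) = η(u) − η(ū) − G(ū)·(A(u) − A(ū))`. -/
theorem relative_entropy_lower_bounds
    (n d : ℕ) (p : ℝ) (hp : 1 < p)
    (A : EuclideanSpace ℝ (Fin n) → EuclideanSpace ℝ (Fin n))
    (F : Fin d → EuclideanSpace ℝ (Fin n) → EuclideanSpace ℝ (Fin n))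
    (η : EuclideanSpace ℝ (Fin n) → ℝ)
    (q : Fin d → EuclideanSpace ℝ (Fin n) → ℝ)
    (G : EuclideanSpace ℝ (Fin n) → EuclideanSpace ℝ (Fin n))
    -- smoothness of the constitutive functions
    (hAreg : ContDiff ℝ 2 A) (hFreg : ∀ α, ContDiff ℝ (⊤ : ℕ∞) (F α))
    (hηreg : ContDiff ℝ (⊤ : ℕ∞) η) (hqreg : ∀ α, ContDiff ℝ (⊤ : ℕ∞) (q α))
    (hGreg : ContDiff ℝ (⊤ : ℕ∞) G)
    -- (H1): A is globally invertible with nonsingular differential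
    (hH1 : Function.Bijective A)
    (hH1' : ∀ w, Function.Bijective (fderiv ℝ A w))
    -- (H2): entropy pair with multiplier G
    (hH2η : ∀ w ξ, fderiv ℝ η w ξ = ⟪G w, fderiv ℝ A w ξ⟫)
    (hH2q : ∀ α w ξ, fderiv ℝ (q α) w ξ = ⟪G w, fderiv ℝ (F α) w ξ⟫)
    -- (H3): ∇²η(u) − G(u)·∇²A(u) is positive definite
    (hH3 : ∀ w (ξ : EuclideanSpace ℝ (Fin n)), ξ ≠ 0 →
      0 < iteratedFDeriv ℝ 2 η w ![ξ, ξ] - ⟪G w, iteratedFDeriv ℝ 2 A w ![ξ, ξ]⟫)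
    -- (A1): growth of the entropy
    (β₁ β₂ B : ℝ) (hβ₁ : 0 < β₁) (hβ₂ : 0 < β₂) (hB : 0 < B)
    (hA1 : ∀ w : EuclideanSpace ℝ (Fin n),
      β₁ * (‖w‖ ^ p + 1) - B ≤ η w ∧ η w ≤ β₂ * (‖w‖ ^ p + 1))
    -- (A2): |F_α(u)|/η(u) = o(1) as |u| → ∞
    (hA2 : ∀ α, ∀ ε > (0:ℝ), ∃ R₀, ∀ w : EuclideanSpace ℝ (Fin n),
      R₀ ≤ ‖w‖ → ‖F α w‖ ≤ ε * η w)
    -- (A3): |A(u)|/η(u) = o(1) as |u| → ∞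
    (hA3 : ∀ ε > (0:ℝ), ∃ R₀, ∀ w : EuclideanSpace ℝ (Fin n),
      R₀ ≤ ‖w‖ → ‖A w‖ ≤ ε * η w)
    (M : ℝ) (hM : 0 < M) :
    ∃ R > M, ∃ c₁ > (0:ℝ), ∃ c₂ > (0:ℝ),
      ∀ u ubar : EuclideanSpace ℝ (Fin n), ‖ubar‖ ≤ M →
        (‖u‖ ≤ R →
          c₁ * ‖A u - A ubar‖ ^ 2 ≤ η u - η ubar - ⟪G ubar, A u - A ubar⟫) ∧
        (R ≤ ‖u‖ →
          c₂ * η u ≤ η u - η ubar - ⟪G ubar, A u - A ubar⟫) :=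
  relative_entropy_lower_bounds_general n p hp A η G hAreg hηreg hGreg hH1 hH1' hH2η hH3 β₁ β₂ B hβ₁
    hA1 hA3 M
end
end
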